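/- arXiv:1607.00368 — 3 statements merged into one kernel-verified Lean document; each statement's English description precedes it below -/
import Mathlib

section
/- ParaExp correctness (two subintervals): let t₀ < T₁ < T₂. Suppose v₁ solves v₁' = A v₁ + g on [t₀, T₁] with v₁(t₀) = 0, and v₂ solves v₂' = A v₂ + g on [T₁, T₂] with v₂(T₁) = 0. Define w₁(t) = exp((t - t₀)A) u₀ and w₂(t) = exp((t - T₁)A) v₁(T₁). Then u(t) defined as v₁(t) + w₁(t) on [t₀, T₁] and v₂(t) + w₁(t) + w₂(t) on [T₁, T₂] solves u' = A u + g on [t₀, T₂] with u(t₀) = u₀; in particular u is continuous at T₁. -/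
open NormedSpace

lemma exp_deriv_aux {E : Type*} [NormedAddCommGroup E] [NormedSpace ℝ E] [FiniteDimensional ℝ E]
    (A : E →L[ℝ] E) (c : ℝ) (x : E) (t : ℝ) :
    HasDerivAt (fun t => exp ((t - c) • A) x) (A (exp ((t - c) • A) x)) t := by
  have h1 : HasDerivAt (fun s : ℝ => exp (s • A)) (A * exp ((t - c) • A)) (t - c) :=
    hasDerivAt_exp_smul_const' A (t - c)
  have h2 : HasDerivAt (fun s : ℝ => exp ((s - c) • A)) (A * exp ((t - c) • A)) t := by
    have hsub : HasDerivAt (fun x : ℝ => x - c) 1 t := by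
      simpa using (hasDerivAt_id t).sub_const c
    simpa [Function.comp_def] using h1.scomp t hsub
  have h3 := ((ContinuousLinearMap.apply ℝ E x).hasFDerivAt).comp_hasDerivAt t h2
  simpa [Function.comp_def] using h3

/-- ParaExp correctness with two subintervals: with `v₁` the particular
solution on `[t₀, T₁]` (zero initial value), `v₂` the particular solution on `[T₁, T₂]`
(zero initial value), `w₁ t = exp ((t - t₀) A) u₀` and `w₂ t = exp ((t - T₁) A) (v₁ T₁)`,
the glued function `u` solves `u' = A u + g` on `[t₀, T₂]` with `u t₀ = u₀`, and in
particular is continuous at `T₁`. -/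
theorem stmt3 {E : Type*} [NormedAddCommGroup E] [NormedSpace ℝ E] [FiniteDimensional ℝ E]
    (A : E →L[ℝ] E) (g : ℝ → E) (hg : Continuous g) (u₀ : E)
    (t₀ T₁ T₂ : ℝ) (h01 : t₀ < T₁) (h12 : T₁ < T₂)
    (v₁ v₂ : ℝ → E)
    (hv₁ : ∀ t ∈ Set.Icc t₀ T₁, HasDerivAt v₁ (A (v₁ t) + g t) t) (hv₁0 : v₁ t₀ = 0)
    (hv₂ : ∀ t ∈ Set.Icc T₁ T₂, HasDerivAt v₂ (A (v₂ t) + g t) t) (hv₂0 : v₂ T₁ = 0)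
    (w₁ w₂ u : ℝ → E)
    (hw₁ : w₁ = fun t => exp ((t - t₀) • A) u₀)
    (hw₂ : w₂ = fun t => exp ((t - T₁) • A) (v₁ T₁))
    (hu : u = fun t => if t ≤ T₁ then v₁ t + w₁ t else v₂ t + w₁ t + w₂ t) :
    u t₀ = u₀ ∧ (∀ t ∈ Set.Icc t₀ T₂, HasDerivAt u (A (u t) + g t) t)
      ∧ ContinuousAt u T₁ := by
  have hw₁d : ∀ t, HasDerivAt w₁ (A (w₁ t)) t := by
    subst hw₁; exact fun t => exp_deriv_aux A t₀ u₀ t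
  have hw₂d : ∀ t, HasDerivAt w₂ (A (w₂ t)) t := by
    subst hw₂; exact fun t => exp_deriv_aux A T₁ (v₁ T₁) t
  -- value agreement at T₁
  have hw₂T₁ : w₂ T₁ = v₁ T₁ := by
    rw [hw₂]; simp
  have huT₁ : v₁ T₁ + w₁ T₁ = v₂ T₁ + w₁ T₁ + w₂ T₁ := by
    rw [hv₂0, hw₂T₁]; abel
  have hu_left : ∀ t ≤ T₁, u t = v₁ t + w₁ t := by
    intro t ht; rw [hu]; simp [ht]
  have hu_right : ∀ t ∈ Set.Ici T₁, u t = v₂ t + w₁ t + w₂ t := by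
    intro t ht
    rcases eq_or_lt_of_le (Set.mem_Ici.mp ht) with h | h
    · rw [hu]; simp [← h, ← huT₁]
    · rw [hu]; simp [not_le.mpr h]
  -- derivative everywhere in [t₀, T₂]
  have hderiv : ∀ t ∈ Set.Icc t₀ T₂, HasDerivAt u (A (u t) + g t) t := by
    intro t ht
    rcases lt_trichotomy t T₁ with h | h | h
    · -- t < T₁ : u = v₁ + w₁ near t
      have hmem : t ∈ Set.Icc t₀ T₁ := ⟨ht.1, h.le⟩
      have hd : HasDerivAt (fun s => v₁ s + w₁ s) (A (v₁ t) + g t + A (w₁ t)) t :=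
        (hv₁ t hmem).add (hw₁d t)
      have heq : u =ᶠ[nhds t] fun s => v₁ s + w₁ s := by
        filter_upwards [Iio_mem_nhds h] with s hs
        exact hu_left s hs.le
      have := hd.congr_of_eventuallyEq heq
      have hut : u t = v₁ t + w₁ t := hu_left t h.le
      rw [hut, map_add]; convert this using 1; abel
    · -- t = T₁ : glue
      subst h
      have hut : u t = v₁ t + w₁ t := hu_left t le_rfl
      have hd₁ : HasDerivAt (fun s => v₁ s + w₁ s) (A (v₁ t) + g t + A (w₁ t)) t :=
        (hv₁ t ⟨ht.1, le_rfl⟩).add (hw₁d t)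
      have hd₂ : HasDerivAt (fun s => v₂ s + w₁ s + w₂ s)
          (A (v₂ t) + g t + A (w₁ t) + A (w₂ t)) t :=
        ((hv₂ t ⟨le_rfl, ht.2⟩).add (hw₁d t)).add (hw₂d t)
      have hL : HasDerivWithinAt u (A (v₁ t) + g t + A (w₁ t)) (Set.Iic t) t :=
        (hd₁.hasDerivWithinAt).congr (fun s hs => hu_left s hs) (hu_left t le_rfl)
      have hR : HasDerivWithinAt u (A (v₂ t) + g t + A (w₁ t) + A (w₂ t)) (Set.Ici t) t :=
        (hd₂.hasDerivWithinAt).congr (fun s hs => hu_right s hs) (hu_right t Set.self_mem_Ici)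
      have hval : A (v₂ t) + g t + A (w₁ t) + A (w₂ t) = A (v₁ t) + g t + A (w₁ t) := by
        rw [hv₂0, hw₂T₁]; simp; abel
      rw [hval] at hR
      have := hL.union hR
      rw [Set.Iic_union_Ici] at this
      have hfull := this.hasDerivAt (by simp)
      rw [hut, map_add]; convert hfull using 1; abel
    · -- t > T₁ : u = v₂ + w₁ + w₂ near t
      have hd : HasDerivAt (fun s => v₂ s + w₁ s + w₂ s)
          (A (v₂ t) + g t + A (w₁ t) + A (w₂ t)) t :=
        ((hv₂ t ⟨h.le, ht.2⟩).add (hw₁d t)).add (hw₂d t)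
      have heq : u =ᶠ[nhds t] fun s => v₂ s + w₁ s + w₂ s := by
        filter_upwards [Ioi_mem_nhds h] with s hs
        exact hu_right s (Set.mem_Ici.mpr hs.le)
      have := hd.congr_of_eventuallyEq heq
      have hut : u t = v₂ t + w₁ t + w₂ t := hu_right t h.le
      rw [hut, map_add, map_add]; convert this using 1; abel
  refine ⟨?_, hderiv, ?_⟩
  · rw [hu_left t₀ h01.le, hv₁0, hw₁]; simp
  · exact (hderiv T₁ ⟨h01.le, h12.le⟩).continuousAt
end

section
/- ParaExp correctness (p subintervals): given t₀ = T₀ < T₁ < ... < T_p and for each j ∈ {1,...,p} a solution v_j of v_j' = A v_j + g on [T_{j-1}, T_j] with v_j(T_{j-1}) = 0, define w₁(t) = exp((t - T₀)A) u₀ and w_{j+1}(t) = exp((t - T_j)A) v_j(T_j) for j ≥ 1. Then for t ∈ [T_{j-1}, T_j], the function u(t) = v_j(t) + ∑_{i=1}^{j} w_i(t) equals the exact solution exp((t - t₀)A) u₀ + ∫_{t₀}^{t} exp((t - τ)A) g(τ) dτ. -/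
set_option synthInstance.maxHeartbeats 1000000

open NormedSpace

-- Duhamel: uniqueness/variation of constants
lemma duhamel {n : ℕ} (A : ((Fin n → ℝ) →L[ℝ] (Fin n → ℝ))) {g : ℝ → (Fin n → ℝ)}
    (hg : Continuous g) (s e : ℝ) (f : ℝ → (Fin n → ℝ)) (hf0 : f s = 0)
    (hf : ∀ t ∈ Set.Icc s e, HasDerivAt f (A (f t) + g t) t)
    (t : ℝ) (ht : t ∈ Set.Icc s e) :
    f t = ∫ τ in s..t, exp ((t - τ) • A) (g τ) := by
  let +nondep : NormedAlgebra ℚ ((Fin n → ℝ) →L[ℝ] (Fin n → ℝ)) := .restrictScalars ℚ ℝ _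
  have hcont : Continuous fun τ => exp ((t - τ) • A) (g τ) := by
    exact ((exp_continuous.comp ((continuous_const.sub continuous_id).smul
      continuous_const))).clm_apply hg
  have hsub : Set.uIcc s t ⊆ Set.Icc s e := by
    rw [Set.uIcc_of_le ht.1]
    exact Set.Icc_subset_Icc le_rfl ht.2
  have hderiv : ∀ τ ∈ Set.uIcc s t,
      HasDerivAt (fun τ => exp ((t - τ) • A) (f τ)) (exp ((t - τ) • A) (g τ)) τ := by
    intro τ hτ
    have h2 : HasDerivAt (fun τ : ℝ => t - τ) (-1) τ := (hasDerivAt_id τ).const_sub t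
    have h1 : HasDerivAt (fun τ : ℝ => exp ((t - τ) • A))
        ((-1 : ℝ) • (exp ((t - τ) • A) * A)) τ :=
      (hasDerivAt_exp_smul_const (𝕂 := ℝ) A (t - τ)).scomp τ h2
    have h3 := h1.clm_apply (hf τ (hsub hτ))
    refine h3.congr_deriv ?_
    simp [ContinuousLinearMap.mul_apply]
  have hint : IntervalIntegrable (fun τ => exp ((t - τ) • A) (g τ)) MeasureTheory.volume s t :=
    hcont.intervalIntegrable s t
  have := intervalIntegral.integral_eq_sub_of_hasDerivAt hderiv hint
  rw [this, hf0]
  simp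

lemma exp_pull {n : ℕ} (A : ((Fin n → ℝ) →L[ℝ] (Fin n → ℝ))) {g : ℝ → (Fin n → ℝ)}
    (hg : Continuous g) (r s t : ℝ) :
    exp ((t - s) • A) (∫ τ in r..s, exp ((s - τ) • A) (g τ))
      = ∫ τ in r..s, exp ((t - τ) • A) (g τ) := by
  let +nondep : NormedAlgebra ℚ ((Fin n → ℝ) →L[ℝ] (Fin n → ℝ)) := .restrictScalars ℚ ℝ _
  have hcont : Continuous fun τ => exp ((s - τ) • A) (g τ) :=
    ((exp_continuous.comp ((continuous_const.sub continuous_id).smul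
      continuous_const))).clm_apply hg
  rw [← ContinuousLinearMap.intervalIntegral_comp_comm (𝕜 := ℝ) (exp ((t - s) • A)) (hcont.intervalIntegrable r s)]
  refine intervalIntegral.integral_congr fun τ _ => ?_
  have hc : Commute ((t - s) • A) ((s - τ) • A) := ((Commute.refl A).smul_left _).smul_right _
  have : exp ((t - s) • A) * exp ((s - τ) • A) = exp ((t - τ) • A) := by
    rw [← exp_add_of_commute hc, ← add_smul]
    ring_nf
  calc exp ((t - s) • A) (exp ((s - τ) • A) (g τ))
      = (exp ((t - s) • A) * exp ((s - τ) • A)) (g τ) := rfl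
    _ = exp ((t - τ) • A) (g τ) := by rw [this]


/-- ParaExp correctness with `p` subintervals: for `t ∈ [T (j-1), T j]`,
`v j t + ∑_{i=1}^{j} w i t` equals the exact variation-of-constants solution. -/
theorem stmt4 {n : ℕ} (A : ((Fin n → ℝ) →L[ℝ] (Fin n → ℝ))) (g : ℝ → (Fin n → ℝ))
    (hg : Continuous g) (u₀ : Fin n → ℝ) (p : ℕ) (hp : 1 ≤ p)
    (T : ℕ → ℝ) (hT : ∀ j < p, T j < T (j + 1)) (t₀ : ℝ) (ht₀ : T 0 = t₀)
    (v : ℕ → ℝ → (Fin n → ℝ))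
    (hv : ∀ j ∈ Finset.Icc 1 p, (v j (T (j - 1)) = 0 ∧
      ∀ t ∈ Set.Icc (T (j - 1)) (T j), HasDerivAt (v j) (A (v j t) + g t) t))
    (w : ℕ → ℝ → (Fin n → ℝ))
    (hw₁ : w 1 = fun t => exp ((t - T 0) • A) u₀)
    (hw : ∀ j, 1 ≤ j → w (j + 1) = fun t => exp ((t - T j) • A) (v j (T j))) :
    ∀ j ∈ Finset.Icc 1 p, ∀ t ∈ Set.Icc (T (j - 1)) (T j),
      v j t + ∑ i ∈ Finset.Icc 1 j, w i t
        = exp ((t - t₀) • A) u₀ + ∫ τ in t₀..t, exp ((t - τ) • A) (g τ) := by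
  let +nondep : NormedAlgebra ℚ ((Fin n → ℝ) →L[ℝ] (Fin n → ℝ)) := .restrictScalars ℚ ℝ _
  intro j hj t ht
  simp only [Finset.mem_Icc] at hj
  obtain ⟨m, rfl⟩ : ∃ m, j = m + 1 := ⟨j - 1, (Nat.succ_pred_eq_of_pos hj.1).symm⟩
  have hjm : m + 1 - 1 = m := rfl
  rw [hjm] at ht
  -- continuity of the kernel
  have hcont : ∀ t' : ℝ, Continuous fun τ => exp ((t' - τ) • A) (g τ) := fun t' =>
    ((exp_continuous.comp ((continuous_const.sub continuous_id).smul
      continuous_const))).clm_apply hg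
  -- value of v at t
  have hvj : v (m + 1) t = ∫ τ in T m..t, exp ((t - τ) • A) (g τ) := by
    obtain ⟨h0, hd⟩ := hv (m + 1) (Finset.mem_Icc.2 ⟨Nat.le_add_left 1 m, hj.2⟩)
    rw [hjm] at h0 hd
    exact duhamel A hg (T m) (T (m + 1)) _ h0 hd t ht
  -- each middle w term is an integral
  have hwk : ∀ k < m, w (k + 2) t = ∫ τ in T k..T (k + 1), exp ((t - τ) • A) (g τ) := by
    intro k hk
    have hk1p : k + 1 ≤ p := le_trans (Nat.succ_le_of_lt (Nat.lt_succ_of_lt hk)) hj.2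
    obtain ⟨h0, hd⟩ := hv (k + 1) (Finset.mem_Icc.2 ⟨Nat.le_add_left 1 k, hk1p⟩)
    have hTk : T k ≤ T (k + 1) := (hT k (lt_of_lt_of_le (Nat.lt_of_lt_of_le hk (Nat.le_succ m)) hj.2)).le
    have hval : v (k + 1) (T (k + 1)) = ∫ τ in T k..T (k + 1),
        exp ((T (k + 1) - τ) • A) (g τ) := by
      have := duhamel A hg (T k) (T (k + 1)) _ h0 hd (T (k + 1)) ⟨hTk, le_rfl⟩
      simpa using this
    rw [hw (k + 1) (Nat.le_add_left 1 k)]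
    simp only
    rw [hval, exp_pull A hg]
  -- the sum
  have hsum : ∑ i ∈ Finset.Icc 1 (m + 1), w i t
      = exp ((t - T 0) • A) u₀ + ∫ τ in (T 0)..(T m), exp ((t - τ) • A) (g τ) := by
    rw [← Finset.Ico_add_one_right_eq_Icc, Finset.sum_Ico_eq_sum_range]
    simp only [Nat.add_sub_cancel]
    rw [Finset.sum_range_succ']
    have : ∀ k ∈ Finset.range m, w (1 + (k + 1)) t
        = ∫ τ in T k..T (k + 1), exp ((t - τ) • A) (g τ) := by
      intro k hk
      rw [show 1 + (k + 1) = k + 2 by ring, hwk k (Finset.mem_range.1 hk)]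
    rw [Finset.sum_congr rfl this, hw₁,
      intervalIntegral.sum_integral_adjacent_intervals
        (fun k _ => (hcont t).intervalIntegrable _ _)]
    ring_nf
  rw [hvj, hsum, ht₀]
  rw [← intervalIntegral.integral_add_adjacent_intervals (b := T m)
      ((hcont t).intervalIntegrable t₀ (T m)) ((hcont t).intervalIntegrable (T m) t)]
  abel
end

section
/- Error propagation in ParaExp: with p subintervals and exact matrix exponentials, if each computed particular solution ṽ_j satisfies ‖ṽ_j(T_j) - v_j(T_j)‖ ≤ ε and A generates a norm-preserving group (‖exp(sA)x‖ = ‖x‖ for all s, x), then the ParaExp output ũ satisfies ‖ũ(t) - u(t)‖ ≤ (j)·ε + ‖ṽ_j(t) - v_j(t)‖ ≤ p·ε + max_j sup_{t∈I_j} ‖ṽ_j(t) - v_j(t)‖ for t ∈ I_j. -/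
open NormedSpace Matrix

/-- error propagation in ParaExp: if the exponential group of `A`
preserves the norm and each computed particular solution `vApprox j` has endpoint error at
most `ε` (and error at most `δ` on its subinterval), then on each subinterval
`I_j = [T (j-1), T j]` the ParaExp output `uApprox` satisfies
`‖uApprox t - u t‖ ≤ j ε + ‖vApprox j t - v j t‖ ≤ p ε + δ`. -/
theorem stmt19 {n : ℕ} (A : Matrix (Fin n) (Fin n) ℝ)
    (hiso : ∀ (s : ℝ) (x : Fin n → ℝ), ‖(NormedSpace.exp (s • A)).mulVec x‖ = ‖x‖)
    (p : ℕ) (hp : 1 ≤ p) (T : ℕ → ℝ) (hT : ∀ j < p, T j < T (j + 1))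
    (u₀ : Fin n → ℝ) (ε δ : ℝ) (hε : 0 ≤ ε)
    (v vApprox : ℕ → ℝ → (Fin n → ℝ))
    (hend : ∀ j ∈ Finset.Icc 1 p, ‖vApprox j (T j) - v j (T j)‖ ≤ ε)
    (hδ : ∀ j ∈ Finset.Icc 1 p, ∀ t ∈ Set.Icc (T (j - 1)) (T j),
      ‖vApprox j t - v j t‖ ≤ δ)
    (u uApprox : ℕ → ℝ → (Fin n → ℝ))
    (hu : u = fun j t => v j t + (NormedSpace.exp ((t - T 0) • A)).mulVec u₀
      + ∑ i ∈ Finset.Icc 1 (j - 1), (NormedSpace.exp ((t - T i) • A)).mulVec (v i (T i)))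
    (huApprox : uApprox = fun j t => vApprox j t + (NormedSpace.exp ((t - T 0) • A)).mulVec u₀
      + ∑ i ∈ Finset.Icc 1 (j - 1), (NormedSpace.exp ((t - T i) • A)).mulVec (vApprox i (T i))) :
    ∀ j ∈ Finset.Icc 1 p, ∀ t ∈ Set.Icc (T (j - 1)) (T j),
      ‖uApprox j t - u j t‖ ≤ j * ε + ‖vApprox j t - v j t‖
        ∧ ‖uApprox j t - u j t‖ ≤ p * ε + δ := by
  intro j hj t ht
  simp only [Finset.mem_Icc] at hj
  have key : uApprox j t - u j t = (vApprox j t - v j t)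
      + ∑ i ∈ Finset.Icc 1 (j - 1),
        (NormedSpace.exp ((t - T i) • A)).mulVec (vApprox i (T i) - v i (T i)) := by
    subst hu huApprox
    simp only [Matrix.mulVec_sub, Finset.sum_sub_distrib]
    abel
  have hsum : ‖∑ i ∈ Finset.Icc 1 (j - 1),
      (NormedSpace.exp ((t - T i) • A)).mulVec (vApprox i (T i) - v i (T i))‖ ≤ (j - 1 : ℕ) * ε := by
    calc ‖∑ i ∈ Finset.Icc 1 (j - 1),
        (NormedSpace.exp ((t - T i) • A)).mulVec (vApprox i (T i) - v i (T i))‖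
        ≤ ∑ i ∈ Finset.Icc 1 (j - 1),
          ‖(NormedSpace.exp ((t - T i) • A)).mulVec (vApprox i (T i) - v i (T i))‖ :=
          norm_sum_le _ _
      _ ≤ ∑ i ∈ Finset.Icc 1 (j - 1), ε := by
          refine Finset.sum_le_sum fun i hi => ?_
          rw [hiso]
          simp only [Finset.mem_Icc] at hi
          exact hend i (Finset.mem_Icc.mpr ⟨hi.1, hi.2.trans (Nat.sub_le j 1 |>.trans hj.2)⟩)
      _ = (j - 1 : ℕ) * ε := by
          rw [Finset.sum_const, Nat.card_Icc]
          simp [nsmul_eq_mul]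
  have h1 : ‖uApprox j t - u j t‖ ≤ (j : ℝ) * ε + ‖vApprox j t - v j t‖ := by
    rw [key]
    calc ‖(vApprox j t - v j t) + ∑ i ∈ Finset.Icc 1 (j - 1),
        (NormedSpace.exp ((t - T i) • A)).mulVec (vApprox i (T i) - v i (T i))‖
        ≤ ‖vApprox j t - v j t‖ + ((j - 1 : ℕ) : ℝ) * ε :=
          (norm_add_le _ _).trans (by gcongr)
      _ ≤ (j : ℝ) * ε + ‖vApprox j t - v j t‖ := by
          have : ((j - 1 : ℕ) : ℝ) ≤ (j : ℝ) := by exact_mod_cast Nat.sub_le j 1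
          nlinarith
  refine ⟨h1, h1.trans ?_⟩
  have hjp : (j : ℝ) ≤ (p : ℝ) := by exact_mod_cast hj.2
  have hδ' := hδ j (Finset.mem_Icc.mpr hj) t ht
  nlinarith
end
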